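/- Let ρ ≥ 0 be continuous, compactly supported in B(0,M), ρ ≠ 0, f as above. If |y| > 2M and |x| > M + (|y|+M)/√2 then ∂²f/∂x²(x,y) > 0, while if |x| < -M + (|y|-M)/√2 then ∂²f/∂x²(x,y) < 0; hence the zeros of x ↦ ∂²f/∂x²(x,y) lie in a union of two intervals whose lengths are bounded by (2+√2)M, uniformly in |y| > 2M. -/
import Mathlib
open MeasureTheory

lemma aux_pos (ρ : ℝ × ℝ → ℝ) (M : ℝ) (hM : 0 < M)
    (hρc : Continuous ρ) (hρ0 : ∀ q, 0 ≤ ρ q) (hρne : ρ ≠ 0)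
    (hsupp : tsupport ρ ⊆ {q : ℝ × ℝ | q.1 ^ 2 + q.2 ^ 2 ≤ M ^ 2})
    (x y : ℝ) (hy : 2 * M < |y|) (g : ℝ × ℝ → ℝ) (hg : Continuous g)
    (hgpos : ∀ q ∈ tsupport ρ, 0 < g q) :
    0 < ∫ q : ℝ × ℝ, ρ q * g q / Real.sqrt ((x - q.1) ^ 2 + (y - q.2) ^ 2) ^ 5 := by
  set h : ℝ × ℝ → ℝ := fun q => ρ q * g q / Real.sqrt ((x - q.1) ^ 2 + (y - q.2) ^ 2) ^ 5 with hh
  -- denominator positive on tsupport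
  have hden : ∀ q ∈ tsupport ρ, 0 < Real.sqrt ((x - q.1) ^ 2 + (y - q.2) ^ 2) ^ 5 := by
    intro q hq
    have h2 : q.2 ^ 2 ≤ M ^ 2 := by
      have := hsupp hq; simp only [Set.mem_setOf_eq] at this
      nlinarith [sq_nonneg q.1]
    have habs : |q.2| ≤ M := by nlinarith [abs_nonneg q.2, sq_abs q.2]
    have : 0 < |y - q.2| := by
      have := abs_sub_abs_le_abs_sub y q.2
      have : M < |y - q.2| := by linarith [abs_sub_abs_le_abs_sub y q.2]
      linarith
    have hpos : 0 < (x - q.1) ^ 2 + (y - q.2) ^ 2 := by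
      nlinarith [sq_nonneg (x - q.1), sq_abs (y - q.2)]
    positivity
  -- support of h inside tsupport ρ
  have hsub : Function.support h ⊆ tsupport ρ := by
    intro q hq
    by_contra hc
    have : ρ q = 0 := image_eq_zero_of_notMem_tsupport hc
    simp [hh, this] at hq
  -- continuity
  have hconth : Continuous h := by
    rw [continuous_iff_continuousAt]
    intro q0
    rcases eq_or_ne ((x - q0.1) ^ 2 + (y - q0.2) ^ 2) 0 with h0 | h0
    · -- q0 = (x, y), away from tsupport
      have hq1 : q0.1 = x ∧ q0.2 = y := by
        constructor <;> nlinarith [sq_nonneg (x - q0.1), sq_nonneg (y - q0.2)]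
      have hq0n : q0 ∉ tsupport ρ := by
        intro hc
        have := hsupp hc
        simp only [Set.mem_setOf_eq, hq1.1, hq1.2] at this
        nlinarith [sq_nonneg x, abs_nonneg y, sq_abs y, hM.le]
      have hev : ∀ᶠ q in nhds q0, h q = 0 := by
        have : IsOpen (tsupport ρ)ᶜ := (isClosed_tsupport ρ).isOpen_compl
        filter_upwards [this.mem_nhds hq0n] with q hq
        have : ρ q = 0 := image_eq_zero_of_notMem_tsupport hq
        simp [hh, this]
      exact ContinuousAt.congr (continuousAt_const) (by filter_upwards [hev] with q hq using hq.symm)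
    · have hcA : ContinuousAt (fun q : ℝ × ℝ => Real.sqrt ((x - q.1) ^ 2 + (y - q.2) ^ 2) ^ 5) q0 := by
        fun_prop
      have hne : Real.sqrt ((x - q0.1) ^ 2 + (y - q0.2) ^ 2) ^ 5 ≠ 0 := by
        have : 0 < (x - q0.1) ^ 2 + (y - q0.2) ^ 2 :=
          lt_of_le_of_ne (by positivity) (Ne.symm h0)
        positivity
      exact ((hρc.continuousAt.mul hg.continuousAt).div hcA hne)
  -- compact support
  have hcs : HasCompactSupport h := by
    have hsub2 : tsupport h ⊆ tsupport ρ :=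
      closure_minimal hsub (isClosed_tsupport ρ)
    have hball : tsupport ρ ⊆ Metric.closedBall (0 : ℝ × ℝ) M := by
      intro q hq
      have := hsupp hq; simp only [Set.mem_setOf_eq] at this
      have h1 : |q.1| ≤ M := by nlinarith [abs_nonneg q.1, sq_abs q.1, sq_nonneg q.2]
      have h2 : |q.2| ≤ M := by nlinarith [abs_nonneg q.2, sq_abs q.2, sq_nonneg q.1]
      rw [Metric.mem_closedBall, Prod.dist_eq]
      simp [Real.dist_eq, h1, h2]
    exact HasCompactSupport.of_support_subset_isCompact
      ((isCompact_closedBall _ _).of_isClosed_subset (isClosed_tsupport ρ) hball) hsub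
  have hint : Integrable h := hconth.integrable_of_hasCompactSupport hcs
  -- nonnegativity
  have hnn : ∀ q, 0 ≤ h q := by
    intro q
    rcases eq_or_lt_of_le (hρ0 q) with hz | hp
    · simp [hh, ← hz]
    · have hq : q ∈ tsupport ρ := subset_closure (by simpa [Function.mem_support] using hp.ne')
      exact le_of_lt (div_pos (mul_pos hp (hgpos q hq)) (hden q hq))
  rw [integral_pos_iff_support_of_nonneg hnn hint]
  obtain ⟨q0, hq0⟩ : ∃ q, ρ q ≠ 0 := Function.ne_iff.mp hρne
  have hρq0 : 0 < ρ q0 := lt_of_le_of_ne (hρ0 q0) (Ne.symm hq0)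
  have hq0s : q0 ∈ tsupport ρ := subset_closure (by simpa [Function.mem_support] using hq0)
  have hhq0 : 0 < h q0 := div_pos (mul_pos hρq0 (hgpos q0 hq0s)) (hden q0 hq0s)
  have hopen : IsOpen (h ⁻¹' Set.Ioi 0) := hconth.isOpen_preimage _ isOpen_Ioi
  have hposmeas : 0 < volume (h ⁻¹' Set.Ioi 0) := hopen.measure_pos volume ⟨q0, hhq0⟩
  exact lt_of_lt_of_le hposmeas (measure_mono fun q hq => ne_of_gt hq)


theorem potential_second_deriv_sign (ρ : ℝ × ℝ → ℝ) (M : ℝ) (hM : 0 < M)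
    (hρc : Continuous ρ) (hρ0 : ∀ q, 0 ≤ ρ q) (hρne : ρ ≠ 0)
    (hsupp : tsupport ρ ⊆ {q : ℝ × ℝ | q.1 ^ 2 + q.2 ^ 2 ≤ M ^ 2}) :
    ∀ y : ℝ, |y| > 2 * M →
      (∀ x : ℝ, |x| > M + (|y| + M) / Real.sqrt 2 →
        0 < ∫ q : ℝ × ℝ, ρ q * (2 * (x - q.1) ^ 2 - (y - q.2) ^ 2) /
          Real.sqrt ((x - q.1) ^ 2 + (y - q.2) ^ 2) ^ 5) ∧
      (∀ x : ℝ, |x| < -M + (|y| - M) / Real.sqrt 2 →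
        (∫ q : ℝ × ℝ, ρ q * (2 * (x - q.1) ^ 2 - (y - q.2) ^ 2) /
          Real.sqrt ((x - q.1) ^ 2 + (y - q.2) ^ 2) ^ 5) < 0) ∧
      (∀ x : ℝ,
        (∫ q : ℝ × ℝ, ρ q * (2 * (x - q.1) ^ 2 - (y - q.2) ^ 2) /
          Real.sqrt ((x - q.1) ^ 2 + (y - q.2) ^ 2) ^ 5) = 0 →
        x ∈ Set.Icc (-M - (|y| + M) / Real.sqrt 2) (M - (|y| - M) / Real.sqrt 2) ∪
          Set.Icc (-M + (|y| - M) / Real.sqrt 2) (M + (|y| + M) / Real.sqrt 2)) := by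
  intro y hy
  have hs2 : (0:ℝ) < Real.sqrt 2 := Real.sqrt_pos.mpr (by norm_num)
  have hs2sq : Real.sqrt 2 ^ 2 = 2 := Real.sq_sqrt (by norm_num)
  have hbounds : ∀ q ∈ tsupport ρ, |q.1| ≤ M ∧ |q.2| ≤ M := by
    intro q hq
    have := hsupp hq; simp only [Set.mem_setOf_eq] at this
    constructor
    · nlinarith [abs_nonneg q.1, sq_abs q.1, sq_nonneg q.2]
    · nlinarith [abs_nonneg q.2, sq_abs q.2, sq_nonneg q.1]
  have h1 : ∀ x : ℝ, |x| > M + (|y| + M) / Real.sqrt 2 →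
      0 < ∫ q : ℝ × ℝ, ρ q * (2 * (x - q.1) ^ 2 - (y - q.2) ^ 2) /
        Real.sqrt ((x - q.1) ^ 2 + (y - q.2) ^ 2) ^ 5 := by
    intro x hx
    apply aux_pos ρ M hM hρc hρ0 hρne hsupp x y hy
      (fun q => 2 * (x - q.1) ^ 2 - (y - q.2) ^ 2) (by fun_prop)
    intro q hq
    obtain ⟨hq1, hq2⟩ := hbounds q hq
    have hA : Real.sqrt 2 * (|x| - M) > |y| + M := by
      rw [gt_iff_lt, ← div_lt_iff₀' hs2]; linarith
    have e1 : |x| - M ≤ |x - q.1| := by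
      have := abs_sub_abs_le_abs_sub x q.1; linarith
    have e2 : |y - q.2| ≤ |y| + M := by
      have := abs_sub y q.2; linarith
    have e3 : 0 ≤ |x| - M := by
      have : 0 ≤ (|y| + M) / Real.sqrt 2 := by positivity
      linarith
    nlinarith [sq_abs (x - q.1), sq_abs (y - q.2), abs_nonneg (y - q.2), abs_nonneg (x - q.1),
      mul_le_mul e1 e1 e3 (abs_nonneg _)]
  have h2 : ∀ x : ℝ, |x| < -M + (|y| - M) / Real.sqrt 2 →
      (∫ q : ℝ × ℝ, ρ q * (2 * (x - q.1) ^ 2 - (y - q.2) ^ 2) /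
        Real.sqrt ((x - q.1) ^ 2 + (y - q.2) ^ 2) ^ 5) < 0 := by
    intro x hx
    have hpos : 0 < ∫ q : ℝ × ℝ, ρ q * ((y - q.2) ^ 2 - 2 * (x - q.1) ^ 2) /
        Real.sqrt ((x - q.1) ^ 2 + (y - q.2) ^ 2) ^ 5 := by
      apply aux_pos ρ M hM hρc hρ0 hρne hsupp x y hy
        (fun q => (y - q.2) ^ 2 - 2 * (x - q.1) ^ 2) (by fun_prop)
      intro q hq
      obtain ⟨hq1, hq2⟩ := hbounds q hq
      have hA : Real.sqrt 2 * (|x| + M) < |y| - M := by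
        rw [← lt_div_iff₀' hs2]; linarith
      have e1 : |x - q.1| ≤ |x| + M := by
        have := abs_sub x q.1; linarith
      have e2 : |y| - M ≤ |y - q.2| := by
        have := abs_sub_abs_le_abs_sub y q.2; linarith
      have e3 : 0 ≤ |y| - M := by linarith
      have h4 : Real.sqrt 2 * (|x| + M) * (Real.sqrt 2 * (|x| + M)) < (|y| - M) * (|y| - M) :=
        mul_lt_mul'' hA hA (by positivity) (by positivity)
      nlinarith [sq_abs (x - q.1), sq_abs (y - q.2), abs_nonneg (y - q.2), abs_nonneg (x - q.1),
        mul_le_mul e1 e1 (abs_nonneg _) (by positivity : (0:ℝ) ≤ |x| + M),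
        mul_le_mul e2 e2 e3 (abs_nonneg _)]
    have heq : (∫ q : ℝ × ℝ, ρ q * (2 * (x - q.1) ^ 2 - (y - q.2) ^ 2) /
        Real.sqrt ((x - q.1) ^ 2 + (y - q.2) ^ 2) ^ 5)
        = -∫ q : ℝ × ℝ, ρ q * ((y - q.2) ^ 2 - 2 * (x - q.1) ^ 2) /
        Real.sqrt ((x - q.1) ^ 2 + (y - q.2) ^ 2) ^ 5 := by
      rw [← integral_neg]
      congr 1; funext q; ring
    rw [heq]; linarith
  refine ⟨h1, h2, ?_⟩
  intro x hx0
  set A := (|y| + M) / Real.sqrt 2 with hA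
  set B := (|y| - M) / Real.sqrt 2 with hB
  have hApos : 0 < A := by positivity
  have hBpos : 0 < B := by
    apply div_pos _ hs2; linarith
  rcases lt_or_ge x (-M - A) with hc | hc
  · exfalso
    have : |x| > M + A := by
      rw [gt_iff_lt, lt_abs]; right; linarith
    linarith [h1 x this]
  rcases le_or_gt x (M - B) with hc2 | hc2
  · exact Or.inl ⟨hc, hc2⟩
  rcases lt_or_ge x (-M + B) with hc3 | hc3
  · exfalso
    have : |x| < -M + B := abs_lt.mpr ⟨by linarith, by linarith⟩
    linarith [h2 x this]
  rcases le_or_gt x (M + A) with hc4 | hc4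
  · exact Or.inr ⟨hc3, hc4⟩
  · exfalso
    have : |x| > M + A := by rw [gt_iff_lt, lt_abs]; left; linarith
    linarith [h1 x this]
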